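/- arXiv:1711.00420 — 2 statements merged into one kernel-verified Lean document; each statement's English description precedes it below -/
import Mathlib

section
/- If T is a semistandard (X,λ)-tableau and x ∈ X, then the result (T ←ε x) of ε-inserting x into T is a semistandard (X,μ)-tableau, where [μ] = [λ] ∪ {b_m} for the final bumped node b_m, and μ is a partition of n+1 when λ ⊢ n. -/
namespace SuperRSK

variable {X Y : Type*}

/-- The super order `≺` on a superalphabet: `a ≺ b` iff (`a` odd, `b` even), or
(both even and `a < b`), or (both odd and `a > b`). Odd means parity `true`. -/
def SuperPrec [LinearOrder X] (par : X → Bool) (a b : X) : Prop :=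
  (par a = true ∧ par b = false) ∨
  (par a = false ∧ par b = false ∧ a < b) ∨
  (par a = true ∧ par b = true ∧ b < a)

/-- The `δ`-coordinate of a node: row if `δ = false`, column if `δ = true`. -/
def coord (δ : Bool) (u : ℕ × ℕ) : ℕ := if δ then u.2 else u.1

/-- A tableau is a function `ℕ × ℕ → WithTop X`, equal to `⊤` outside its diagram.
Semistandard: the support is a Young diagram and entries are non-decreasing
(both encoded by monotonicity into `WithTop X`), equal entries in a row are even,
and equal entries in a column are odd. -/
def IsSStd [LinearOrder X] (par : X → Bool) (T : ℕ × ℕ → WithTop X) : Prop :=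
  (∀ u v : ℕ × ℕ, u.1 ≤ v.1 → u.2 ≤ v.2 → T u ≤ T v) ∧
  (∀ u v : ℕ × ℕ, ∀ a : X, u.1 = v.1 → u.2 < v.2 → T u = (a : WithTop X) →
    T v = (a : WithTop X) → par a = false) ∧
  (∀ u v : ℕ × ℕ, ∀ a : X, u.2 = v.2 → u.1 < v.1 → T u = (a : WithTop X) →
    T v = (a : WithTop X) → par a = true)

/-- A standard tableau: semistandard with no repeated letters. -/
def IsStd [LinearOrder X] (par : X → Bool) (T : ℕ × ℕ → WithTop X) : Prop :=
  IsSStd par T ∧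
  ∀ u v : ℕ × ℕ, ∀ a : X, T u = (a : WithTop X) → T v = (a : WithTop X) → u = v

/-- The comparison used in `ε`-insertion: strict for `ε = false`, weak for `ε = true`. -/
def cmpIns [LinearOrder X] (ε : Bool) (x : X) (v : WithTop X) : Prop :=
  if ε then (x : WithTop X) ≤ v else (x : WithTop X) < v

/-- The comparison used in `ε`-extraction: strict for `ε = false`, weak for `ε = true`. -/
def cmpExt [LinearOrder X] (ε : Bool) (y : X) (v : WithTop X) : Prop :=
  if ε then v ≤ (y : WithTop X) else v < (y : WithTop X)

/-- `BumpSeq ε par T x b xs m` says `b 0, …, b (m-1)` is the bumped node sequence and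
`xs 0, …, xs (m-1)` the bumped letter sequence for the `ε`-insertion of `x` into `T`:
`xs 0 = x`; at step `j` the current letter `xs j` is placed at the smallest node `b j`
of the `i`-th row (if `ε + parity (xs j) = 0`) or column (if `= 1`) satisfying the
`ε`-comparison, where `i = 0` at the start and afterwards is one more than the
corresponding coordinate of the previous bumped node; the bumped letter becomes the
next inserted letter, until an empty node (`⊤`) is reached. -/
def BumpSeq [LinearOrder X] (ε : Bool) (par : X → Bool) (T : ℕ × ℕ → WithTop X)
    (x : X) (b : ℕ → ℕ × ℕ) (xs : ℕ → X) (m : ℕ) : Prop :=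
  0 < m ∧ xs 0 = x ∧
  (∀ j, j + 1 < m → T (b j) = (xs (j + 1) : WithTop X)) ∧
  T (b (m - 1)) = ⊤ ∧
  ∀ j, j < m →
    (coord (Bool.xor ε (par (xs j))) (b j) =
      (if j = 0 then 0 else coord (Bool.xor ε (par (xs j))) (b (j - 1)) + 1)) ∧
    cmpIns ε (xs j) (T (b j)) ∧
    ∀ v : ℕ × ℕ,
      coord (Bool.xor ε (par (xs j))) v = coord (Bool.xor ε (par (xs j))) (b j) →
      cmpIns ε (xs j) (T v) →
      coord (!(Bool.xor ε (par (xs j)))) (b j) ≤ coord (!(Bool.xor ε (par (xs j)))) v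

/-- `InsResult T b xs m R` says `R` is the tableau obtained from `T` by the insertion
with bumped nodes `b` and bumped letters `xs`: `R (b k) = xs k` and `R` agrees with `T`
elsewhere. -/
def InsResult [LinearOrder X] (T : ℕ × ℕ → WithTop X) (b : ℕ → ℕ × ℕ) (xs : ℕ → X)
    (m : ℕ) (R : ℕ × ℕ → WithTop X) : Prop :=
  (∀ k, k < m → R (b k) = (xs k : WithTop X)) ∧
  ∀ u : ℕ × ℕ, (∀ k, k < m → u ≠ b k) → R u = T u

/-- `ExtractSeq ε par T u c ys m` says `c 0, …, c (m-1)` is the unbumped node sequence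
and `ys 0, …, ys (m-1)` the unbumped letter sequence for the `ε`-extraction at `u`:
`c 0 = u`, `ys 0 = T u`; at each step `c (j+1)` is the greatest node, in the row/column
(according to `ε` plus the parity of `ys j`) preceding that of `c j`, whose entry is
`ε`-below `ys j`; the process stops upon reaching the first row/column. -/
def ExtractSeq [LinearOrder X] (ε : Bool) (par : X → Bool) (T : ℕ × ℕ → WithTop X)
    (u : ℕ × ℕ) (c : ℕ → ℕ × ℕ) (ys : ℕ → X) (m : ℕ) : Prop :=
  0 < m ∧ c 0 = u ∧ T u = (ys 0 : WithTop X) ∧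
  (∀ j, j + 1 < m →
    0 < coord (Bool.xor ε (par (ys j))) (c j) ∧
    coord (Bool.xor ε (par (ys j))) (c (j + 1)) + 1 =
      coord (Bool.xor ε (par (ys j))) (c j) ∧
    T (c (j + 1)) = (ys (j + 1) : WithTop X) ∧
    cmpExt ε (ys j) (T (c (j + 1))) ∧
    ∀ v : ℕ × ℕ,
      coord (Bool.xor ε (par (ys j))) v + 1 = coord (Bool.xor ε (par (ys j))) (c j) →
      cmpExt ε (ys j) (T v) →
      coord (!(Bool.xor ε (par (ys j)))) v ≤ coord (!(Bool.xor ε (par (ys j)))) (c (j + 1))) ∧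
  coord (Bool.xor ε (par (ys (m - 1)))) (c (m - 1)) = 0

/-- `ExtResult T c ys m R` says `R` is the tableau obtained from `T` by the extraction
with unbumped nodes `c` and letters `ys`: each `c k` (`k ≥ 1`) receives `ys (k-1)`, the
initial node `c 0` is emptied, and `R` agrees with `T` elsewhere. -/
def ExtResult [LinearOrder X] (T : ℕ × ℕ → WithTop X) (c : ℕ → ℕ × ℕ) (ys : ℕ → X)
    (m : ℕ) (R : ℕ × ℕ → WithTop X) : Prop :=
  (∀ k, 0 < k → k < m → R (c k) = (ys (k - 1) : WithTop X)) ∧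
  (∀ v : ℕ × ℕ, (∀ k, k < m → v ≠ c k) → R v = T v) ∧
  ((∀ k, 0 < k → k < m → c 0 ≠ c k) → R (c 0) = ⊤)

/-! Semistandardness is a local condition: it suffices to compare every node with its right
and its lower neighbour. Along the bumping path the letters weakly increase (strictly for
`ε = false`), and a stretch of equal letters moves straight ahead in one direction; hence the
path never comes back weakly above-left of an earlier node, and every other node weakly
above-left of `b j` carries an entry at most `xs j`. Checking a pair of neighbours of the new
tableau then splits according to which of the two nodes lie on the path. -/

def nextNode (d : Bool) (u : ℕ × ℕ) : ℕ × ℕ := if d then (u.1, u.2 + 1) else (u.1 + 1, u.2)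

@[simp]
lemma coord_nextNode (d : Bool) (u : ℕ × ℕ) : coord d (nextNode d u) = coord d u + 1 := by
  cases d <;> rfl

@[simp]
lemma coord_not_nextNode (d : Bool) (u : ℕ × ℕ) : coord (!d) (nextNode d u) = coord (!d) u := by
  cases d <;> rfl

lemma lt_nextNode (d : Bool) (u : ℕ × ℕ) : u < nextNode d u := by
  cases d <;> simp [nextNode, Prod.lt_iff]

lemma coord_mono (d : Bool) : Monotone (coord d) := fun _ _ h => by
  cases d
  exacts [h.1, h.2]

lemma le_of_coord_le {d : Bool} {u v : ℕ × ℕ} (h : coord d u ≤ coord d v)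
    (h' : coord (!d) u ≤ coord (!d) v) : u ≤ v := by
  cases d
  exacts [⟨h, h'⟩, ⟨h', h⟩]

lemma eq_of_coord_eq {d : Bool} {u v : ℕ × ℕ} (h : coord d u = coord d v)
    (h' : coord (!d) u = coord (!d) v) : u = v :=
  le_antisymm (le_of_coord_le h.le h'.le) (le_of_coord_le h.ge h'.ge)

section Tableau

variable [LinearOrder X] {par : X → Bool} {T : ℕ × ℕ → WithTop X}

def SStdAt (par : X → Bool) (T : ℕ × ℕ → WithTop X) (d : Bool) (u : ℕ × ℕ) : Prop :=
  T u ≤ T (nextNode d u) ∧ ∀ a : X, T u = a → T (nextNode d u) = a → par a = !d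

lemma IsSStd.monotone (hT : IsSStd par T) : Monotone T := fun u v h => hT.1 u v h.1 h.2

lemma IsSStd.sStdAt (hT : IsSStd par T) (d : Bool) (u : ℕ × ℕ) : SStdAt par T d u := by
  refine ⟨hT.monotone (lt_nextNode d u).le, fun a hu hv => ?_⟩
  cases d
  exacts [hT.2.2 u (nextNode false u) a rfl (Nat.lt_succ_self _) hu hv,
    hT.2.1 u (nextNode true u) a rfl (Nat.lt_succ_self _) hu hv]

lemma isSStd_of_forall_sStdAt (h : ∀ d u, SStdAt par T d u) : IsSStd par T := by
  have mono : Monotone T := by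
    have hrow (i : ℕ) : Monotone fun j => T (i, j) :=
      monotone_nat_of_le_succ fun j => (h true (i, j)).1
    have hcol (j : ℕ) : Monotone fun i => T (i, j) :=
      monotone_nat_of_le_succ fun i => (h false (i, j)).1
    rintro ⟨i, j⟩ ⟨i', j'⟩ ⟨hi, hj⟩
    exact (hcol j hi).trans (hrow i' hj)
  have par_eq {d : Bool} {u v : ℕ × ℕ} {a : X} (huv : nextNode d u ≤ v) (hu : T u = a)
      (hv : T v = a) : par a = !d :=
    (h d u).2 a hu (le_antisymm (hv ▸ mono huv) (hu ▸ (h d u).1))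
  exact ⟨fun u v h1 h2 => mono ⟨h1, h2⟩,
    fun u v a h1 h2 => par_eq (d := true) ⟨h1.le, h2⟩,
    fun u v a h1 h2 => par_eq (d := false) ⟨h2, h1.le⟩⟩

lemma cmpIns.coe_le {ε : Bool} {y : X} {v : WithTop X} (h : cmpIns ε y v) :
    (y : WithTop X) ≤ v := by
  cases ε
  exacts [le_of_lt h, h]

lemma le_of_not_cmpIns {ε : Bool} {y : X} {v : WithTop X} (h : ¬ cmpIns ε y v) : v ≤ y := by
  cases ε
  exacts [not_lt.1 h, (not_le.1 h).le]

end Tableau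

namespace BumpSeq

variable [LinearOrder X] {ε : Bool} {par : X → Bool} {T : ℕ × ℕ → WithTop X} {x : X}
  {b : ℕ → ℕ × ℕ} {xs : ℕ → X} {m j k l : ℕ} {δ : Bool}

lemma pos (hb : BumpSeq ε par T x b xs m) : 0 < m := hb.1

lemma entry_eq (hb : BumpSeq ε par T x b xs m) (hj : j + 1 < m) : T (b j) = xs (j + 1) :=
  hb.2.2.1 j hj

lemma entry_last (hb : BumpSeq ε par T x b xs m) : T (b (m - 1)) = ⊤ := hb.2.2.2.1

lemma cmpIns_entry (hb : BumpSeq ε par T x b xs m) (hj : j < m) : cmpIns ε (xs j) (T (b j)) :=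
  (hb.2.2.2.2 j hj).2.1

lemma coord_zero (hb : BumpSeq ε par T x b xs m) (hδ : Bool.xor ε (par (xs 0)) = δ) :
    coord δ (b 0) = 0 := by
  subst hδ
  simpa using (hb.2.2.2.2 0 hb.pos).1

lemma coord_succ (hb : BumpSeq ε par T x b xs m) (hj : j + 1 < m)
    (hδ : Bool.xor ε (par (xs (j + 1))) = δ) : coord δ (b (j + 1)) = coord δ (b j) + 1 := by
  subst hδ
  simpa using (hb.2.2.2.2 (j + 1) hj).1

lemma coord_not_le (hb : BumpSeq ε par T x b xs m) (hj : j < m)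
    (hδ : Bool.xor ε (par (xs j)) = δ) {v : ℕ × ℕ} (hv : coord δ v = coord δ (b j))
    (hc : cmpIns ε (xs j) (T v)) : coord (!δ) (b j) ≤ coord (!δ) v := by
  subst hδ
  exact (hb.2.2.2.2 j hj).2.2 v hv hc

lemma xs_le_succ (hb : BumpSeq ε par T x b xs m) (hj : j + 1 < m) : xs j ≤ xs (j + 1) := by
  have := (hb.cmpIns_entry (j := j) (by omega)).coe_le
  rwa [hb.entry_eq hj, WithTop.coe_le_coe] at this

lemma xs_lt_succ (hb : BumpSeq false par T x b xs m) (hj : j + 1 < m) : xs j < xs (j + 1) := by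
  have : cmpIns false (xs j) (T (b j)) := hb.cmpIns_entry (by omega)
  rwa [cmpIns, if_neg Bool.false_ne_true, hb.entry_eq hj, WithTop.coe_lt_coe] at this

lemma xs_mono (hb : BumpSeq ε par T x b xs m) (hjk : j ≤ k) (hk : k < m) : xs j ≤ xs k := by
  induction k, hjk using Nat.le_induction with
  | base => rfl
  | succ k _ ih => exact (ih (by omega)).trans (hb.xs_le_succ hk)

lemma xs_strictMono (hb : BumpSeq false par T x b xs m) (hjk : j < k) (hk : k < m) :
    xs j < xs k := by
  induction k, hjk using Nat.le_induction with
  | base => exact hb.xs_lt_succ hk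
  | succ k _ ih => exact (ih (by omega)).trans (hb.xs_lt_succ hk)

lemma xs_eq_of_le_of_le (hb : BumpSeq ε par T x b xs m) (hjl : j ≤ l) (hlk : l ≤ k) (hk : k < m)
    (h : xs j = xs k) : xs l = xs k :=
  le_antisymm (hb.xs_mono hlk hk) (h ▸ hb.xs_mono hjl (by omega))

/-- A run of equal letters is bumped along consecutive lines of a single direction. -/
lemma coord_lt_of_xs_eq (hb : BumpSeq ε par T x b xs m) (hjk : j < k) (hk : k < m)
    (h : xs (j + 1) = xs k) (hδ : Bool.xor ε (par (xs k)) = δ) : coord δ (b j) < coord δ (b k) := by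
  induction k, (hjk : j + 1 ≤ k) using Nat.le_induction with
  | base => simp [hb.coord_succ hk hδ]
  | succ k hjk ih =>
    have hk' : xs k = xs (k + 1) := hb.xs_eq_of_le_of_le hjk k.le_succ hk h
    rw [hb.coord_succ hk hδ]
    exact (ih (by omega) (h.trans hk'.symm) (hk' ▸ hδ)).trans (Nat.lt_succ_self _)

lemma coord_not_succ_le (hT : IsSStd par T) (hb : BumpSeq ε par T x b xs m) (hj : j + 1 < m)
    (hδ : Bool.xor ε (par (xs (j + 1))) = δ) :
    coord (!δ) (b (j + 1)) ≤ coord (!δ) (b j) := by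
  have hTb := hb.entry_eq hj
  obtain ⟨hle, hpar⟩ := hT.sStdAt δ (b j)
  rw [hTb] at hle
  -- the neighbour of `b j` in the line of `b (j + 1)` passes the comparison
  have hc : cmpIns ε (xs (j + 1)) (T (nextNode δ (b j))) := by
    cases ε
    · refine lt_of_le_of_ne hle fun heq => ?_
      have := hpar _ hTb heq.symm
      simp_all
    · exact hle
  simpa using hb.coord_not_le (by omega) hδ (by simp [hb.coord_succ hj hδ]) hc

lemma entry_le_of_lt (hT : IsSStd par T) (hb : BumpSeq ε par T x b xs m) (hj : j < m)
    {v : ℕ × ℕ} (hv : v < b j) : T v ≤ xs j := by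
  set δ := Bool.xor ε (par (xs j)) with hδ
  rcases (coord_mono δ hv.le).eq_or_lt with hline | hbefore
  · have hlt : coord (!δ) v < coord (!δ) (b j) :=
      (coord_mono (!δ) hv.le).lt_of_ne fun h => hv.ne (eq_of_coord_eq hline h)
    exact le_of_not_cmpIns fun hc => (hb.coord_not_le hj hδ.symm hline hc).not_gt hlt
  · obtain ⟨i, rfl⟩ : ∃ i, j = i + 1 :=
      Nat.exists_eq_succ_of_ne_zero fun h => by subst h; simp [hb.coord_zero hδ.symm] at hbefore
    have hvi : v ≤ b i :=
      le_of_coord_le (d := δ) (by rw [hb.coord_succ hj hδ.symm] at hbefore; omega)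
        ((coord_mono _ hv.le).trans (hb.coord_not_succ_le hT hj hδ.symm))
    exact hb.entry_eq hj ▸ hT.monotone hvi

lemma not_le_of_lt (hT : IsSStd par T) (hb : BumpSeq ε par T x b xs m) (hlk : l < k) (hk : k < m) :
    ¬ b k ≤ b l := by
  intro hle
  have hT_le := hT.monotone hle
  rw [hb.entry_eq (j := l) (by omega)] at hT_le
  rcases Nat.lt_or_ge (k + 1) m with hk1 | hk1
  · rw [hb.entry_eq hk1, WithTop.coe_le_coe] at hT_le
    have heq : xs (l + 1) = xs k :=
      le_antisymm (hb.xs_mono hlk hk) ((hb.xs_le_succ hk1).trans hT_le)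
    exact (coord_mono _ hle).not_gt (hb.coord_lt_of_xs_eq hlk hk heq rfl)
  · rw [show k = m - 1 by omega, hb.entry_last, top_le_iff] at hT_le
    exact WithTop.coe_ne_top hT_le

end BumpSeq

namespace InsResult

variable [LinearOrder X] {ε : Bool} {par : X → Bool} {T R : ℕ × ℕ → WithTop X} {x : X}
  {b : ℕ → ℕ × ℕ} {xs : ℕ → X} {m k l : ℕ} {d : Bool} {u : ℕ × ℕ}

lemma sStdAt_of_bump_of_bump (hR : InsResult T b xs m R) (hT : IsSStd par T)
    (hb : BumpSeq ε par T x b xs m) (hk : k < m) (hl : l < m) (h : nextNode d (b k) = b l) :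
    SStdAt par R d (b k) := by
  rw [SStdAt, h, hR.1 k hk, hR.1 l hl]
  rcases lt_trichotomy k l with hkl | rfl | hlk
  · refine ⟨WithTop.coe_le_coe.2 (hb.xs_mono hkl.le hl), fun a hka hla => ?_⟩
    obtain rfl : xs k = a := WithTop.coe_injective hka
    have heq : xs k = xs l := WithTop.coe_injective hla.symm
    cases ε
    · exact absurd heq (hb.xs_strictMono hkl hl).ne
    · by_cases hd : Bool.xor true (par (xs l)) = d
      · simp_all
      · have hnd : Bool.xor true (par (xs l)) = !d := Bool.eq_not_of_ne hd
        have hcoord := hb.coord_lt_of_xs_eq hkl hl (hb.xs_eq_of_le_of_le k.le_succ hkl hl heq) hnd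
        simp [← h] at hcoord
  · exact absurd h (lt_nextNode d (b k)).ne'
  · exact absurd (h ▸ (lt_nextNode d (b k)).le) (hb.not_le_of_lt hT hlk hk)

lemma sStdAt_of_bump_of_not_bump (hR : InsResult T b xs m R) (hT : IsSStd par T)
    (hb : BumpSeq ε par T x b xs m) (hk : k < m) (hw : ∀ l, l < m → nextNode d (b k) ≠ b l) :
    SStdAt par R d (b k) := by
  obtain ⟨hle, hpar⟩ := hT.sStdAt d (b k)
  have hc := hb.cmpIns_entry hk
  rw [SStdAt, hR.1 k hk, hR.2 _ hw]
  refine ⟨hc.coe_le.trans hle, fun a hka hwa => ?_⟩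
  cases ε
  · exact absurd (hka ▸ hwa ▸ hle) (not_le.2 hc)
  · exact hpar a (le_antisymm (hwa ▸ hle) (hka ▸ hc)) hwa

lemma sStdAt_of_not_bump_of_bump (hR : InsResult T b xs m R) (hT : IsSStd par T)
    (hb : BumpSeq ε par T x b xs m) (hu : ∀ k, k < m → u ≠ b k) (hl : l < m)
    (h : nextNode d u = b l) : SStdAt par R d u := by
  have hlt : u < b l := h ▸ lt_nextNode d u
  have hcoord : coord d (b l) = coord d u + 1 := by simp [← h]
  have hcoord' : coord (!d) (b l) = coord (!d) u := by simp [← h]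
  rw [SStdAt, h, hR.2 u hu, hR.1 l hl]
  refine ⟨hb.entry_le_of_lt hT hl hlt, fun a hua hla => ?_⟩
  obtain rfl : xs l = a := WithTop.coe_injective hla
  by_cases hd : Bool.xor ε (par (xs l)) = d
  · cases ε
    · -- equality is impossible here: `T u ≤ xs (l - 1) < xs l`
      obtain ⟨i, rfl⟩ : ∃ i, l = i + 1 :=
        Nat.exists_eq_succ_of_ne_zero fun h0 => by subst h0; simp [hb.coord_zero hd] at hcoord
      have hui : u < b i := lt_of_le_of_ne
        (le_of_coord_le (d := d) (by rw [hb.coord_succ hl hd] at hcoord; omega)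
          (hcoord' ▸ hb.coord_not_succ_le hT hl hd)) (hu i (by omega))
      have := (hb.entry_le_of_lt hT (by omega) hui).trans_lt
        (WithTop.coe_lt_coe.2 (hb.xs_lt_succ hl))
      exact absurd hua this.ne
    · simp_all
  · have hnd : Bool.xor ε (par (xs l)) = !d := Bool.eq_not_of_ne hd
    have hnc : ¬ cmpIns ε (xs l) (T u) := fun hc => by
      have := hb.coord_not_le hl hnd hcoord'.symm hc
      simp at this
      omega
    cases ε
    · simp_all
    · exact absurd (hua ▸ le_rfl) hnc

lemma sStdAt (hR : InsResult T b xs m R) (hT : IsSStd par T) (hb : BumpSeq ε par T x b xs m)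
    (d : Bool) (u : ℕ × ℕ) : SStdAt par R d u := by
  by_cases hu : ∃ k, k < m ∧ u = b k
  · obtain ⟨k, hk, rfl⟩ := hu
    by_cases hw : ∃ l, l < m ∧ nextNode d (b k) = b l
    · obtain ⟨l, hl, h⟩ := hw
      exact hR.sStdAt_of_bump_of_bump hT hb hk hl h
    · push Not at hw
      exact hR.sStdAt_of_bump_of_not_bump hT hb hk hw
  · push Not at hu
    by_cases hw : ∃ l, l < m ∧ nextNode d u = b l
    · obtain ⟨l, hl, h⟩ := hw
      exact hR.sStdAt_of_not_bump_of_bump hT hb hu hl h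
    · push Not at hw
      have := hT.sStdAt d u
      rwa [SStdAt, ← hR.2 u hu, ← hR.2 _ hw] at this

lemma eq_top_iff (hR : InsResult T b xs m R) (hb : BumpSeq ε par T x b xs m) (u : ℕ × ℕ) :
    R u = ⊤ ↔ T u = ⊤ ∧ u ≠ b (m - 1) := by
  constructor
  · intro hu
    have hoff : ∀ k, k < m → u ≠ b k := fun k hk h =>
      WithTop.coe_ne_top ((hR.1 k hk).symm.trans (h ▸ hu))
    exact ⟨hR.2 u hoff ▸ hu, hoff _ (by have := hb.pos; omega)⟩
  · rintro ⟨hu, hlast⟩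
    have hoff : ∀ k, k < m → u ≠ b k := by
      rintro k hk rfl
      rcases Nat.lt_or_ge (k + 1) m with hk1 | hk1
      · exact WithTop.coe_ne_top ((hb.entry_eq hk1).symm.trans hu)
      · exact hlast (by rw [show m - 1 = k by omega])
    exact (hR.2 u hoff).trans hu

end InsResult

/-- The result of `ε`-inserting a letter into a semistandard tableau is a semistandard
tableau whose diagram is the old one together with the single new node `b (m-1)`. -/
theorem stmt8 [LinearOrder X] (ε : Bool) (par : X → Bool) (T : ℕ × ℕ → WithTop X)
    (x : X) (b : ℕ → ℕ × ℕ) (xs : ℕ → X) (m : ℕ) (R : ℕ × ℕ → WithTop X)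
    (hT : IsSStd par T) (hb : BumpSeq ε par T x b xs m) (hR : InsResult T b xs m R) :
    IsSStd par R ∧ (∀ u : ℕ × ℕ, R u = ⊤ ↔ (T u = ⊤ ∧ u ≠ b (m - 1))) :=
  ⟨isSStd_of_forall_sStdAt (hR.sStdAt hT hb), hR.eq_top_iff hb⟩

end SuperRSK
end

section
/- For a standard (X,λ)-tableau T and a letter x ∈ X not occurring in T: (1) the conjugate of the insertion equals the (ε+1)-insertion into the conjugate, i.e., (T ←ε x)' = (T' ←(ε+1) x), and the bumped node sequence of the latter is the transpose of that of the former; (2) the dual of the insertion equals the (ε+1)-insertion of x* into T*, i.e., (T ←ε x)* = (T* ←(ε+1) x*), and both share the same bumped node sequence. -/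
namespace SuperRSK

variable {X Y : Type*}

/-!
Because `T` is standard and `x` does not occur in it, the letter `xs j` inserted at step `j`
never occurs in the row or column scanned at that step: `x` occurs nowhere, and `xs (j + 1)`
occurs only at `b j`, which lies on the previous row or column. On that line the strict and
weak comparisons therefore agree, so `ε` may be replaced by `ε + 1`. Doing so swaps rows and
columns, which is undone by transposing `T`; flipping all parities as well leaves
`ε + parity` unchanged, so the dual insertion follows the same nodes.
-/

lemma coord_swap (δ : Bool) (u : ℕ × ℕ) : coord δ u.swap = coord (!δ) u := by
  cases δ <;> rfl

lemma cmpIns_not_iff [LinearOrder X] {ε : Bool} {x : X} {v : WithTop X}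
    (h : v ≠ (x : WithTop X)) : cmpIns (!ε) x v ↔ cmpIns ε x v := by
  cases ε
  · exact ⟨fun hle => lt_of_le_of_ne hle h.symm, le_of_lt⟩
  · exact ⟨le_of_lt, fun hle => lt_of_le_of_ne hle h.symm⟩

namespace BumpSeq

variable [LinearOrder X] {ε : Bool} {par : X → Bool} {T : ℕ × ℕ → WithTop X} {x : X}
  {b : ℕ → ℕ × ℕ} {xs : ℕ → X} {m : ℕ}

lemma ne_of_coord_eq (hb : BumpSeq ε par T x b xs m)
    (hinj : ∀ u v : ℕ × ℕ, ∀ a : X, T u = (a : WithTop X) → T v = (a : WithTop X) → u = v)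
    (hx : ∀ u : ℕ × ℕ, T u ≠ (x : WithTop X)) {j : ℕ} (hj : j < m) {v : ℕ × ℕ}
    (hv : coord (Bool.xor ε (par (xs j))) v = coord (Bool.xor ε (par (xs j))) (b j)) :
    T v ≠ (xs j : WithTop X) := by
  obtain ⟨-, hx0, hbT, -, hstep⟩ := hb
  intro hTv
  cases j with
  | zero => exact hx v (hx0 ▸ hTv)
  | succ i =>
    have hvb : v = b i := hinj v (b i) (xs (i + 1)) hTv (hbT i hj)
    have hline := (hstep (i + 1) hj).1
    simp only [Nat.succ_ne_zero, if_false, Nat.add_sub_cancel] at hline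
    rw [hvb] at hv
    omega

lemma cmpIns_not_iff_of_coord_eq (hb : BumpSeq ε par T x b xs m)
    (hinj : ∀ u v : ℕ × ℕ, ∀ a : X, T u = (a : WithTop X) → T v = (a : WithTop X) → u = v)
    (hx : ∀ u : ℕ × ℕ, T u ≠ (x : WithTop X)) {j : ℕ} (hj : j < m) {v : ℕ × ℕ}
    (hv : coord (Bool.xor ε (par (xs j))) v = coord (Bool.xor ε (par (xs j))) (b j)) :
    cmpIns (!ε) (xs j) (T v) ↔ cmpIns ε (xs j) (T v) :=
  cmpIns_not_iff (hb.ne_of_coord_eq hinj hx hj hv)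

lemma transpose (hb : BumpSeq ε par T x b xs m)
    (hinj : ∀ u v : ℕ × ℕ, ∀ a : X, T u = (a : WithTop X) → T v = (a : WithTop X) → u = v)
    (hx : ∀ u : ℕ × ℕ, T u ≠ (x : WithTop X)) :
    BumpSeq (!ε) par (T ∘ Prod.swap) x (Prod.swap ∘ b) xs m := by
  have hcmp {j v} := hb.cmpIns_not_iff_of_coord_eq (j := j) (v := v) hinj hx
  obtain ⟨hm, hx0, hbT, hbtop, hstep⟩ := hb
  refine ⟨hm, hx0, fun j hj => by simpa using hbT j hj, by simpa using hbtop, fun j hj => ?_⟩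
  obtain ⟨hline, hbj, hmin⟩ := hstep j hj
  simp only [Function.comp_apply, Bool.not_xor, coord_swap, Bool.not_not, Prod.swap_swap]
  refine ⟨hline, (hcmp hj rfl).mpr hbj, fun v hv hTv => ?_⟩
  have hvs : _ = _ := (coord_swap _ v).trans hv
  simpa only [coord_swap, Bool.not_not, Prod.swap_swap] using
    hmin v.swap hvs ((hcmp hj hvs).mp hTv)

lemma dual (hb : BumpSeq ε par T x b xs m)
    (hinj : ∀ u v : ℕ × ℕ, ∀ a : X, T u = (a : WithTop X) → T v = (a : WithTop X) → u = v)
    (hx : ∀ u : ℕ × ℕ, T u ≠ (x : WithTop X)) :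
    BumpSeq (!ε) (fun a => !par a) T x b xs m := by
  have hcmp {j v} := hb.cmpIns_not_iff_of_coord_eq (j := j) (v := v) hinj hx
  obtain ⟨hm, hx0, hbT, hbtop, hstep⟩ := hb
  refine ⟨hm, hx0, hbT, hbtop, fun j hj => ?_⟩
  obtain ⟨hline, hbj, hmin⟩ := hstep j hj
  simp only [Bool.not_xor_not]
  exact ⟨hline, (hcmp hj rfl).mpr hbj, fun v hv hv' => hmin v hv ((hcmp hj hv).mp hv')⟩

end BumpSeq

lemma InsResult.transpose [LinearOrder X] {T : ℕ × ℕ → WithTop X} {b : ℕ → ℕ × ℕ}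
    {xs : ℕ → X} {m : ℕ} {R : ℕ × ℕ → WithTop X} (hR : InsResult T b xs m R) :
    InsResult (T ∘ Prod.swap) (Prod.swap ∘ b) xs m (R ∘ Prod.swap) := by
  refine ⟨fun k hk => by simpa using hR.1 k hk, fun u hu => hR.2 u.swap fun k hk hne => ?_⟩
  exact hu k hk (by simp [← hne])

/-- For a standard tableau `T` and a letter `x` not occurring in `T`:
(1) conjugating (transposing) turns `ε`-insertion into `(ε+1)`-insertion, with the
bumped node sequence transposed, and the resulting tableaux are conjugate;
(2) dualizing (flipping all parities; the dual order agrees with the original) turns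
`ε`-insertion into `(ε+1)`-insertion with the same bumped node sequence. -/
theorem stmt11 [LinearOrder X] (ε : Bool) (par : X → Bool) (T : ℕ × ℕ → WithTop X)
    (x : X) (b : ℕ → ℕ × ℕ) (xs : ℕ → X) (m : ℕ)
    (hT : IsStd par T) (hx : ∀ u : ℕ × ℕ, T u ≠ (x : WithTop X))
    (hb : BumpSeq ε par T x b xs m) :
    (BumpSeq (!ε) par (fun u => T (u.2, u.1)) x (fun j => ((b j).2, (b j).1)) xs m ∧
      ∀ R : ℕ × ℕ → WithTop X, InsResult T b xs m R →
        InsResult (fun u => T (u.2, u.1)) (fun j => ((b j).2, (b j).1)) xs m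
          (fun u => R (u.2, u.1))) ∧
    BumpSeq (!ε) (fun a => !par a) T x b xs m :=
  ⟨⟨hb.transpose hT.2 hx, fun _ hR => hR.transpose⟩, hb.dual hT.2 hx⟩

end SuperRSK
end
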